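/- There exists an absolute constant C > 0 such that the following holds. For every d ≥ 2, M ≥ 1, T ≥ 1, δ ∈ (0,1), and all fixed vectors g_{t,n} ∈ ℝ^d for t = 0,…,T−1 and n = 1,…,M: let ḡ_t = (1/M)·Σ_{n=1}^M g_{t,n} and Δ_{t,n} = g_{t,n} − ḡ_t, and suppose (1/M)·Σ_{n=1}^M ‖Δ_{t,n}‖₂² ≤ σ_t² and max_{1≤n≤M} ‖Δ_{t,n}‖₂ ≤ B_t for each t. If the vectors v_{t,n} are i.i.d. normalized Rademacher vectors in ℝ^d (independent across both t and n), then with probability at least 1 − δ, simultaneously for all t = 0,…,T−1: ‖(d/M)·Σ_{n=1}^M (v_{t,n}ᵀ g_{t,n})·v_{t,n} − ḡ_t‖₂ ≤ C·√((d−1)·log(2dT/δ)/M)·(‖ḡ_t‖₂ + σ_t) + C·((d−1)·log(2dT/δ)/M)·(‖ḡ_t‖₂ + B_t). -/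

import Mathlib

/-!
Write `εₙⱼ` for the sign of `vₙ` in coordinate `j` at a fixed round. Since `d vₙⱼ vₙᵢ = εₙⱼ εₙᵢ`,
coordinate `i` of the projection error is `(1/M) Σₙ Σ_{j ≠ i} gₙⱼ εₙⱼ εₙᵢ`. Replacing each `εₙⱼ`
(`j ≠ i`) by `εₙⱼ εₙᵢ` is a bijection of sign patterns, so this coordinate is a Rademacher sum
with variance proxy `W = Σₙ ‖gₙ‖² / M²`, and Hoeffding's inequality (here by counting, from
`cosh x ≤ exp (x² / 2)`) gives `|coordinate| ≤ √(2 W log (2dT/δ))` outside probability `δ/(dT)`.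
A union bound over the `dT` pairs (round, coordinate) leaves probability `1 - δ`, and there the
error has norm at most `√d √(2 W log (2dT/δ))`. This is at most the claimed bound with `C = 4`,
because `Σₙ ‖gₙ‖² ≤ 2M (‖ḡ‖² + σ²)` and `d ≤ 2 (d - 1)`.
-/

open Finset MeasureTheory
open scoped RealInnerProductSpace

def boolSign (b : Bool) : ℝ := if b then 1 else -1

@[simp]
lemma boolSign_true : boolSign true = 1 := rfl

@[simp]
lemma boolSign_false : boolSign false = -1 := rfl

@[simp]
lemma boolSign_mul_self (b : Bool) : boolSign b * boolSign b = 1 := by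
  cases b <;> norm_num [boolSign]

lemma boolSign_beq (x y : Bool) : boolSign (x == y) = boolSign x * boolSign y := by
  cases x <;> cases y <;> norm_num [boolSign]

section Hoeffding

variable {κ : Type*} [Fintype κ] [DecidableEq κ]

lemma sum_exp_sum_mul_boolSign (c : κ → ℝ) :
    ∑ x : κ → Bool, Real.exp (∑ k, c k * boolSign (x k)) = ∏ k, 2 * Real.cosh (c k) := by
  simp_rw [Real.exp_sum]
  rw [← Fintype.prod_sum fun k b => Real.exp (c k * boolSign b)]
  refine Fintype.prod_congr _ _ fun k => ?_
  rw [Fintype.sum_bool, boolSign_true, boolSign_false, mul_one, mul_neg_one, Real.cosh_eq]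
  ring

lemma sum_exp_sum_mul_boolSign_le (c : κ → ℝ) :
    ∑ x : κ → Bool, Real.exp (∑ k, c k * boolSign (x k))
      ≤ 2 ^ Fintype.card κ * Real.exp (∑ k, c k ^ 2 / 2) := by
  rw [sum_exp_sum_mul_boolSign, Real.exp_sum, ← Finset.card_univ, ← prod_const, ← prod_mul_distrib]
  gcongr with k
  exact Real.cosh_le_exp_half_sq _

lemma card_sum_mul_boolSign_ge_le {a : κ → ℝ} {W τ : ℝ} (hW : 0 < W) (ha : ∑ k, a k ^ 2 ≤ W)
    (hτ : 0 ≤ τ) :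
    (#{x : κ → Bool | τ ≤ ∑ k, a k * boolSign (x k)} : ℝ)
      ≤ 2 ^ Fintype.card κ * Real.exp (-(τ ^ 2 / (2 * W))) := by
  set r := τ / W
  have hr : 0 ≤ r := div_nonneg hτ hW.le
  have markov : (#{x : κ → Bool | τ ≤ ∑ k, a k * boolSign (x k)} : ℝ) * Real.exp (r * τ)
      ≤ ∑ x : κ → Bool, Real.exp (∑ k, r * a k * boolSign (x k)) := by
    rw [← nsmul_eq_mul]
    refine (card_nsmul_le_sum _ _ _ fun x hx => ?_).trans
      (sum_le_sum_of_subset_of_nonneg (filter_subset _ _) fun _ _ _ => (Real.exp_pos _).le)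
    simp_rw [mul_assoc, ← mul_sum]
    exact Real.exp_le_exp.2 (mul_le_mul_of_nonneg_left (mem_filter.1 hx).2 hr)
  have mgf : ∑ k, (r * a k) ^ 2 / 2 ≤ r ^ 2 * W / 2 := by
    simp_rw [mul_pow, ← sum_div, ← mul_sum]
    gcongr
  have hexp : r ^ 2 * W / 2 - r * τ = -(τ ^ 2 / (2 * W)) := by
    simp only [r]
    field_simp
    ring
  rw [← hexp, Real.exp_sub, ← mul_div_assoc, le_div_iff₀ (Real.exp_pos _)]
  calc _ ≤ _ := markov
    _ ≤ 2 ^ Fintype.card κ * Real.exp (∑ k, (r * a k) ^ 2 / 2) :=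
      sum_exp_sum_mul_boolSign_le _
    _ ≤ _ := by gcongr

lemma card_abs_sum_mul_boolSign_gt_le {a : κ → ℝ} {W L : ℝ} (ha : ∑ k, a k ^ 2 ≤ W)
    (hL : 0 ≤ L) :
    (#{x : κ → Bool | √(2 * W * L) < |∑ k, a k * boolSign (x k)|} : ℝ)
      ≤ 2 * Real.exp (-L) * 2 ^ Fintype.card κ := by
  have hsq : 0 ≤ ∑ k, a k ^ 2 := by positivity
  rcases (hsq.trans ha).eq_or_lt with hW | hW
  · have ha0 : ∀ k, a k = 0 := fun k => by
      have := (sum_eq_zero_iff_of_nonneg fun k _ => sq_nonneg (a k)).1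
        (le_antisymm (hW ▸ ha) hsq) k (mem_univ k)
      exact pow_eq_zero_iff two_ne_zero |>.1 this
    simp [ha0, ← hW, Real.exp_nonneg]
  set τ := √(2 * W * L)
  have hexp : -(τ ^ 2 / (2 * W)) = -L := by
    rw [Real.sq_sqrt (by positivity)]
    field_simp
  have hneg : ∑ k, (-a k) ^ 2 ≤ W := by simpa using ha
  have split : ({x : κ → Bool | τ < |∑ k, a k * boolSign (x k)|} : Finset _)
      ⊆ ({x | τ ≤ ∑ k, a k * boolSign (x k)} : Finset _)
        ∪ ({x | τ ≤ ∑ k, -a k * boolSign (x k)} : Finset _) := by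
    intro x hx
    simp only [neg_mul, sum_neg_distrib, mem_union, mem_filter_univ] at hx ⊢
    rcases lt_abs.1 hx with h | h
    · exact Or.inl h.le
    · exact Or.inr h.le
  calc (#{x : κ → Bool | τ < |∑ k, a k * boolSign (x k)|} : ℝ)
      ≤ #{x : κ → Bool | τ ≤ ∑ k, a k * boolSign (x k)}
        + #{x : κ → Bool | τ ≤ ∑ k, -a k * boolSign (x k)} := by
        exact_mod_cast (card_le_card split).trans (card_union_le _ _)
    _ ≤ 2 ^ Fintype.card κ * Real.exp (-(τ ^ 2 / (2 * W)))
        + 2 ^ Fintype.card κ * Real.exp (-(τ ^ 2 / (2 * W))) := by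
        gcongr
        · exact card_sum_mul_boolSign_ge_le hW ha (Real.sqrt_nonneg _)
        · exact card_sum_mul_boolSign_ge_le hW hneg (Real.sqrt_nonneg _)
    _ = 2 * Real.exp (-L) * 2 ^ Fintype.card κ := by
        rw [hexp]
        ring

lemma uniformOfFintype_abs_sum_mul_boolSign_gt_le {Ω : Type*} [Fintype Ω] [Nonempty Ω]
    [MeasurableSpace Ω] [MeasurableSingletonClass Ω] (e : Ω ≃ (κ → Bool)) {a : κ → ℝ} {W L : ℝ}
    (ha : ∑ k, a k ^ 2 ≤ W) (hL : 0 ≤ L) :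
    (PMF.uniformOfFintype Ω).toMeasure {ω | √(2 * W * L) < |∑ k, a k * boolSign (e ω k)|}
      ≤ ENNReal.ofReal (2 * Real.exp (-L)) := by
  classical
  rw [PMF.toMeasure_uniformOfFintype_apply _ (Set.toFinite _).measurableSet,
    Fintype.card_congr e, Fintype.card_fun, Fintype.card_bool]
  refine ENNReal.div_le_of_le_mul ?_
  have hcard : Fintype.card {ω | √(2 * W * L) < |∑ k, a k * boolSign (e ω k)|}
      = #{x : κ → Bool | √(2 * W * L) < |∑ k, a k * boolSign (x k)|} := by
    rw [Fintype.card_ofFinset]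
    exact card_equiv e (by simp)
  rw [hcard, ← ENNReal.ofReal_natCast, ← ENNReal.ofReal_natCast (2 ^ _),
    ← ENNReal.ofReal_mul (by positivity)]
  exact ENNReal.ofReal_le_ofReal (by exact_mod_cast card_abs_sum_mul_boolSign_gt_le ha hL)

end Hoeffding

lemma ofReal_one_sub_card_mul_le_measure {Ω ι : Type*} [MeasurableSpace Ω] [Fintype ι]
    {μ : Measure Ω} [IsProbabilityMeasure μ] {s : Set Ω} {E : ι → Set Ω} {ε : ℝ} (hε : 0 ≤ ε)
    (hE : ∀ j, μ (E j) ≤ ENNReal.ofReal ε) (hs : sᶜ ⊆ ⋃ j, E j) :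
    ENNReal.ofReal (1 - Fintype.card ι * ε) ≤ μ s := by
  have hcompl : μ sᶜ ≤ ENNReal.ofReal (Fintype.card ι * ε) := calc
    μ sᶜ ≤ ∑ j, μ (E j) := (measure_mono hs).trans (measure_iUnion_fintype_le μ E)
    _ ≤ ∑ _j : ι, ENNReal.ofReal ε := sum_le_sum fun j _ => hE j
    _ = _ := by
      rw [sum_const, card_univ, nsmul_eq_mul, ENNReal.ofReal_mul (Nat.cast_nonneg _),
        ENNReal.ofReal_natCast]
  rw [ENNReal.ofReal_sub _ (by positivity), ENNReal.ofReal_one, tsub_le_iff_right]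
  calc 1 = μ (s ∪ sᶜ) := by simp
    _ ≤ μ s + μ sᶜ := measure_union_le _ _
    _ ≤ _ := by gcongr

lemma EuclideanSpace.norm_le_sqrt_card_mul_of_abs_le {ι : Type*} [Fintype ι]
    {x : EuclideanSpace ℝ ι} {τ : ℝ} (hτ : 0 ≤ τ) (hx : ∀ i, |x i| ≤ τ) :
    ‖x‖ ≤ √(Fintype.card ι) * τ := by
  rw [EuclideanSpace.norm_eq, ← Real.sqrt_sq hτ, ← Real.sqrt_mul (Nat.cast_nonneg _)]
  gcongr
  calc ∑ i, ‖x i‖ ^ 2 ≤ ∑ _i : ι, τ ^ 2 :=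
        sum_le_sum fun i _ => pow_le_pow_left₀ (norm_nonneg _) (hx i) 2
    _ = _ := by simp

lemma sum_norm_sq_le_two_mul {ι E : Type*} [SeminormedAddCommGroup E] (s : Finset ι)
    (g : ι → E) (c : E) :
    ∑ n ∈ s, ‖g n‖ ^ 2 ≤ 2 * (#s * ‖c‖ ^ 2 + ∑ n ∈ s, ‖g n - c‖ ^ 2) := by
  have h : ∀ n, ‖g n‖ ^ 2 ≤ 2 * (‖c‖ ^ 2 + ‖g n - c‖ ^ 2) := fun n => calc
    ‖g n‖ ^ 2 ≤ (‖c‖ + ‖g n - c‖) ^ 2 := by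
      gcongr
      simpa using norm_add_le c (g n - c)
    _ ≤ _ := add_sq_le
  calc ∑ n ∈ s, ‖g n‖ ^ 2 ≤ ∑ n ∈ s, 2 * (‖c‖ ^ 2 + ‖g n - c‖ ^ 2) := sum_le_sum fun n _ => h n
    _ = _ := by rw [← mul_sum, sum_add_distrib, sum_const, nsmul_eq_mul]

lemma sqrt_mul_sqrt_two_mul_le {d M L W a s : ℝ} (hd : 2 ≤ d) (hM : 0 < M) (hL : 0 ≤ L) (ha : 0 ≤ a)
    (hs : 0 ≤ s) (hW : W ≤ 2 * (a ^ 2 + s ^ 2) / M) :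
    √d * √(2 * W * L) ≤ 4 * √((d - 1) * L / M) * (a + s) := by
  have hK : 0 ≤ L / M := by positivity
  have hpoly : d * (2 * W * L) ≤ (4 * (a + s)) ^ 2 * ((d - 1) * L / M) := by
    have h1 : 2 * W * L ≤ 4 * (a + s) ^ 2 * (L / M) := calc
      2 * W * L ≤ 2 * (2 * (a ^ 2 + s ^ 2) / M) * L := by gcongr
      _ = 4 * (a ^ 2 + s ^ 2) * (L / M) := by ring
      _ ≤ _ := by gcongr; nlinarith [mul_nonneg ha hs]
    calc d * (2 * W * L) ≤ d * (4 * (a + s) ^ 2 * (L / M)) := by gcongr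
      _ ≤ 2 * (d - 1) * (4 * (a + s) ^ 2 * (L / M)) := by gcongr; linarith
      _ ≤ _ := by
        rw [mul_div_assoc]
        nlinarith [mul_nonneg (mul_nonneg (by linarith : 0 ≤ d - 1) (sq_nonneg (a + s))) hK]
  calc √d * √(2 * W * L) = √(d * (2 * W * L)) := (Real.sqrt_mul (by linarith) _).symm
    _ ≤ √((4 * (a + s)) ^ 2 * ((d - 1) * L / M)) := Real.sqrt_le_sqrt hpoly
    _ = _ := by rw [Real.sqrt_mul (sq_nonneg _), Real.sqrt_sq (by positivity)]; ring

def relativeSigns {β : Type*} [DecidableEq β] (i : β) (x : β → Bool) : β → Bool :=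
  fun j => if j = i then x j else (x j == x i)

lemma relativeSigns_involutive {β : Type*} [DecidableEq β] (i : β) :
    Function.Involutive (relativeSigns i) := by
  intro x
  funext j
  by_cases h : j = i
  · simp [relativeSigns, h]
  · simp only [relativeSigns, h, if_false, if_true]
    cases x j <;> cases x i <;> rfl

lemma boolSign_relativeSigns_of_ne {β : Type*} [DecidableEq β] {i j : β} (x : β → Bool)
    (h : j ≠ i) : boolSign (relativeSigns i x j) = boolSign (x j) * boolSign (x i) := by
  simp [relativeSigns, h, boolSign_beq]

def relativeSignsEquiv {α β γ : Type*} [DecidableEq γ] (i : γ) :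
    (α → β → γ → Bool) ≃ (α × β × γ → Bool) where
  toFun ω k := relativeSigns i (ω k.1 k.2.1) k.2.2
  invFun x t n := relativeSigns i fun j => x (t, n, j)
  left_inv ω := by funext t n; exact relativeSigns_involutive i _
  right_inv x := by funext ⟨t, n, j⟩; exact congrFun (relativeSigns_involutive i _) j

lemma smul_sum_inner_smul_sub_smul_sum_apply {d M : ℕ} (hd : d ≠ 0)
    (g : Fin M → EuclideanSpace ℝ (Fin d)) (ε : Fin M → Fin d → Bool)
    (v : Fin M → EuclideanSpace ℝ (Fin d)) (hv : ∀ n i, v n i = (√d)⁻¹ * boolSign (ε n i))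
    (i : Fin d) :
    (((d : ℝ) / M) • ∑ n, ⟪v n, g n⟫ • v n - (M : ℝ)⁻¹ • ∑ n, g n) i
      = ∑ n, ∑ j, (if j = i then 0 else g n j / M) * (boolSign (ε n j) * boolSign (ε n i)) := by
  have hsqrt : (√d)⁻¹ * (√d)⁻¹ * (d : ℝ) = 1 := by
    rw [← mul_inv, Real.mul_self_sqrt (Nat.cast_nonneg _), inv_mul_cancel₀ (by exact_mod_cast hd)]
  simp only [PiLp.sub_apply, PiLp.smul_apply, WithLp.ofLp_sum, Finset.sum_apply, smul_eq_mul,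
    mul_sum, PiLp.inner_apply, hv, ← sum_sub_distrib]
  refine sum_congr rfl fun n _ => ?_
  have hite : ∀ j, (if j = i then 0 else g n j / M) * (boolSign (ε n j) * boolSign (ε n i))
      = g n j / M * (boolSign (ε n j) * boolSign (ε n i)) - if j = i then g n i / M else 0 := by
    intro j
    split_ifs with h
    · subst h; simp
    · ring
  simp only [hite, sum_sub_distrib, sum_ite_eq', mem_univ, if_true, sum_mul, mul_sum,
    RCLike.inner_apply, conj_trivial]
  congr 1
  · refine sum_congr rfl fun j _ => ?_
    linear_combination (g n j / M * (boolSign (ε n j) * boolSign (ε n i))) * hsqrt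
  · exact inv_mul_eq_div _ _

/-- Vanishes outside round `t`, so that the events of all rounds live on one sign space. -/
noncomputable def projectionErrorCoeff {T M d : ℕ} (g : Fin T → Fin M → EuclideanSpace ℝ (Fin d))
    (t : Fin T) (i : Fin d) (k : Fin T × Fin M × Fin d) : ℝ :=
  if k.1 = t then (if k.2.2 = i then 0 else g t k.2.1 k.2.2 / M) else 0

section projectionErrorCoeff

variable {T M d : ℕ} (g : Fin T → Fin M → EuclideanSpace ℝ (Fin d)) (t : Fin T) (i : Fin d)

lemma sum_projectionErrorCoeff_mul_boolSign (ω : Fin T → Fin M → Fin d → Bool) :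
    ∑ k, projectionErrorCoeff g t i k * boolSign (relativeSignsEquiv i ω k)
      = ∑ n, ∑ j, (if j = i then 0 else g t n j / M)
          * (boolSign (ω t n j) * boolSign (ω t n i)) := by
  simp only [projectionErrorCoeff, Fintype.sum_prod_type, ite_mul, zero_mul, sum_ite_irrel,
    sum_const_zero, sum_ite_eq', mem_univ, if_true]
  refine sum_congr rfl fun n _ => sum_congr rfl fun j _ => ?_
  split_ifs with h
  · rfl
  · rw [← boolSign_relativeSigns_of_ne _ h]
    rfl

lemma sum_projectionErrorCoeff_sq_le :
    ∑ k, projectionErrorCoeff g t i k ^ 2 ≤ (∑ n, ‖g t n‖ ^ 2) / M ^ 2 := by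
  simp only [projectionErrorCoeff, Fintype.sum_prod_type, ite_pow, zero_pow two_ne_zero,
    sum_ite_irrel, sum_const_zero, sum_ite_eq', mem_univ, if_true,
    EuclideanSpace.real_norm_sq_eq, sum_div]
  refine sum_le_sum fun n _ => sum_le_sum fun j _ => ?_
  split_ifs
  · positivity
  · rw [div_pow]

end projectionErrorCoeff

lemma sum_norm_sq_div_sq_le {M : ℕ} {E : Type*} [SeminormedAddCommGroup E] (hM : 0 < M)
    (g : Fin M → E) (c : E) {σ : ℝ} (hσ : (M : ℝ)⁻¹ * ∑ n, ‖g n - c‖ ^ 2 ≤ σ ^ 2) :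
    (∑ n, ‖g n‖ ^ 2) / M ^ 2 ≤ 2 * (‖c‖ ^ 2 + σ ^ 2) / M := by
  have hM' : (0 : ℝ) < M := by exact_mod_cast hM
  rw [inv_mul_le_iff₀ hM'] at hσ
  have h := sum_norm_sq_le_two_mul univ g c
  rw [card_univ, Fintype.card_fin] at h
  calc (∑ n, ‖g n‖ ^ 2) / M ^ 2 ≤ 2 * (M * ‖c‖ ^ 2 + M * σ ^ 2) / M ^ 2 := by
        gcongr
        linarith
    _ = 2 * (‖c‖ ^ 2 + σ ^ 2) / M := by field_simp

lemma norm_le_of_abs_apply_le_sqrt {d M : ℕ} (hd : 2 ≤ d) (hM : 0 < M) {L σ B : ℝ} (hL : 0 ≤ L)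
    (hσ : 0 ≤ σ) (hB : 0 ≤ B) {g : Fin M → EuclideanSpace ℝ (Fin d)} {c : EuclideanSpace ℝ (Fin d)}
    (hσg : (M : ℝ)⁻¹ * ∑ n, ‖g n - c‖ ^ 2 ≤ σ ^ 2) {x : EuclideanSpace ℝ (Fin d)}
    (hx : ∀ i, |x i| ≤ √(2 * ((∑ n, ‖g n‖ ^ 2) / M ^ 2) * L)) :
    ‖x‖ ≤ 4 * √(((d : ℝ) - 1) * L / M) * (‖c‖ + σ) + 4 * (((d : ℝ) - 1) * L / M) * (‖c‖ + B) := by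
  have hd' : (2 : ℝ) ≤ d := by exact_mod_cast hd
  calc ‖x‖ ≤ √(Fintype.card (Fin d)) * √(2 * ((∑ n, ‖g n‖ ^ 2) / M ^ 2) * L) :=
        EuclideanSpace.norm_le_sqrt_card_mul_of_abs_le (Real.sqrt_nonneg _) hx
    _ = √d * √(2 * ((∑ n, ‖g n‖ ^ 2) / M ^ 2) * L) := by rw [Fintype.card_fin]
    _ ≤ 4 * √(((d : ℝ) - 1) * L / M) * (‖c‖ + σ) :=
        sqrt_mul_sqrt_two_mul_le hd' (by exact_mod_cast hM) hL (norm_nonneg _) hσ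
          (sum_norm_sq_div_sq_le hM _ _ hσg)
    _ ≤ _ := by
        have : (0 : ℝ) ≤ d - 1 := by linarith
        exact le_add_of_nonneg_right (by positivity)

/-- Uniform (over `T` rounds) high-probability bound for the scalar-projection error:
there is an absolute constant `C > 0` such that for i.i.d. normalized Rademacher
directions `v_{t,n}` in `ℝ^d` (independent across rounds `t` and agents `n`) and
fixed vectors `g_{t,n}` with per-round bounded heterogeneity, with probability at
least `1 - δ`, simultaneously for all rounds `t`,
`‖(d/M) Σₙ (v_{t,n}ᵀ g_{t,n}) v_{t,n} - ḡ_t‖₂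
  ≤ C√((d-1)log(2dT/δ)/M)(‖ḡ_t‖+σ_t) + C((d-1)log(2dT/δ)/M)(‖ḡ_t‖+B_t)`. -/
theorem scalar_projection_error_uniform_high_probability :
    ∃ C > (0 : ℝ), ∀ (d M T : ℕ), 2 ≤ d → 1 ≤ M → 1 ≤ T → ∀ δ : ℝ, 0 < δ → δ < 1 →
      ∀ (g : Fin T → Fin M → EuclideanSpace ℝ (Fin d))
        (gbar : Fin T → EuclideanSpace ℝ (Fin d)),
      (∀ t, gbar t = (M : ℝ)⁻¹ • ∑ n, g t n) →
      ∀ σ B : Fin T → ℝ, (∀ t, 0 ≤ σ t) → (∀ t, 0 ≤ B t) →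
      (∀ t, (M : ℝ)⁻¹ * ∑ n, ‖g t n - gbar t‖ ^ 2 ≤ σ t ^ 2) →
      (∀ t n, ‖g t n - gbar t‖ ≤ B t) →
      ∀ v : (Fin T → Fin M → Fin d → Bool) → Fin T → Fin M → EuclideanSpace ℝ (Fin d),
      (∀ ω t n i, v ω t n i = (Real.sqrt d)⁻¹ * (if ω t n i then 1 else -1)) →
      ENNReal.ofReal (1 - δ) ≤
        (PMF.uniformOfFintype (Fin T → Fin M → Fin d → Bool)).toMeasure
          {ω | ∀ t, ‖((d : ℝ) / M) • ∑ n, ⟪v ω t n, g t n⟫ • v ω t n - gbar t‖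
            ≤ C * Real.sqrt (((d : ℝ) - 1) * Real.log (2 * d * T / δ) / M)
                * (‖gbar t‖ + σ t)
              + C * (((d : ℝ) - 1) * Real.log (2 * d * T / δ) / M)
                * (‖gbar t‖ + B t)} := by
  refine ⟨4, by norm_num, fun d M T hd hM hT δ hδ _ g gbar hgbar σ B hσ hB hσg _ v hv => ?_⟩
  set L := Real.log (2 * d * T / δ)
  have hL : 0 ≤ L := by
    have : (2 : ℝ) ≤ d := by exact_mod_cast hd
    have : (1 : ℝ) ≤ T := by exact_mod_cast hT
    exact Real.log_nonneg <| (one_le_div hδ).2 (by nlinarith)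
  set E : Fin T × Fin d → Set (Fin T → Fin M → Fin d → Bool) := fun p =>
    {ω | √(2 * ((∑ n, ‖g p.1 n‖ ^ 2) / M ^ 2) * L)
      < |∑ k, projectionErrorCoeff g p.1 p.2 k * boolSign (relativeSignsEquiv p.2 ω k)|}
  have hE : ∀ p, (PMF.uniformOfFintype _).toMeasure (E p) ≤ ENNReal.ofReal (δ / (d * T)) := by
    intro p
    convert uniformOfFintype_abs_sum_mul_boolSign_gt_le (relativeSignsEquiv p.2)
      (sum_projectionErrorCoeff_sq_le g p.1 p.2) hL using 2
    rw [Real.exp_neg, Real.exp_log (by positivity)]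
    field_simp
  have hgood : {ω | ∀ t, ‖((d : ℝ) / M) • ∑ n, ⟪v ω t n, g t n⟫ • v ω t n - gbar t‖
      ≤ 4 * √(((d : ℝ) - 1) * L / M) * (‖gbar t‖ + σ t)
        + 4 * (((d : ℝ) - 1) * L / M) * (‖gbar t‖ + B t)}ᶜ ⊆ ⋃ p, E p := by
    intro ω hω
    by_contra hsmall
    simp only [Set.mem_iUnion, Set.mem_ofPred_eq, not_exists, not_lt, E] at hsmall
    refine hω (Set.mem_ofPred.2 fun t => ?_)
    refine norm_le_of_abs_apply_le_sqrt hd hM hL (hσ t) (hB t) (hσg t) fun i => ?_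
    rw [hgbar, smul_sum_inner_smul_sub_smul_sum_apply (by omega) _ (ω t) _
      (fun n i => hv ω t n i), ← sum_projectionErrorCoeff_mul_boolSign]
    exact hsmall (t, i)
  have := ofReal_one_sub_card_mul_le_measure (by positivity) hE hgood
  rwa [Fintype.card_prod, Fintype.card_fin, Fintype.card_fin, Nat.cast_mul,
    show (T * d : ℝ) * (δ / (d * T)) = δ by field_simp] at this
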